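/- arXiv:1905.06928 — 2 statements merged into one kernel-verified Lean document; each statement's English description precedes it below -/
import Mathlib

section
/- For any n-qubit state ρ and any k ≤ n, the sum over single-qubit partial traces satisfies Σ_{j=1}^{n} A_k(Tr_j ρ) = (n−k) · A_k(ρ). -/
open Matrix BigOperators Finset ComplexOrder

/-- The Pauli matrices, indexed by `Fin 4`: identity, X, Y, Z. -/
noncomputable def pauli : Fin 4 → Matrix (Fin 2) (Fin 2) ℂ
  | 0 => 1
  | 1 => !![0, 1; 1, 0]
  | 2 => !![0, -Complex.I; Complex.I, 0]
  | 3 => !![1, 0; 0, -1]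

/-- An `n`-qubit Pauli word: the tensor product of the Pauli matrices `pauli (w i)`,
realized as a matrix indexed by `Fin n → Fin 2`. -/
noncomputable def pWord {n : ℕ} (w : Fin n → Fin 4) :
    Matrix (Fin n → Fin 2) (Fin n → Fin 2) ℂ :=
  Matrix.of fun x y => ∏ i, pauli (w i) (x i) (y i)

/-- The weight of a Pauli word: the number of non-identity tensor factors. -/
def wt {n : ℕ} (w : Fin n → Fin 4) : ℕ :=
  (Finset.univ.filter fun i => w i ≠ 0).card

/-- The `k`-th sector length of an `n`-qubit matrix:
the sum of squared Pauli expectation values over Pauli words of weight `k`. -/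
noncomputable def sector (n k : ℕ) (ρ : Matrix (Fin n → Fin 2) (Fin n → Fin 2) ℂ) : ℝ :=
  ∑ w ∈ Finset.univ.filter fun w : Fin n → Fin 4 => wt w = k,
    ((pWord w * ρ).trace.re) ^ 2

/-- An `n`-qubit quantum state: positive semidefinite with unit trace. -/
def IsState {n : ℕ} (ρ : Matrix (Fin n → Fin 2) (Fin n → Fin 2) ℂ) : Prop :=
  ρ.PosSemidef ∧ ρ.trace = 1

/-- The partial trace of an `(n+1)`-qubit matrix over qubit `j`. -/
noncomputable def ptrace {n : ℕ} (j : Fin (n + 1))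
    (ρ : Matrix (Fin (n + 1) → Fin 2) (Fin (n + 1) → Fin 2) ℂ) :
    Matrix (Fin n → Fin 2) (Fin n → Fin 2) ℂ :=
  Matrix.of fun x y => ∑ b : Fin 2, ρ (j.insertNth b x) (j.insertNth b y)

lemma prod_insert_eq {n : ℕ} (j : Fin (n+1)) (w : Fin n → Fin 4) (b c : Fin 2)
    (x y : Fin n → Fin 2) :
    (∏ i, pauli (Fin.insertNth (α := fun _ => Fin 4) j 0 w i)
        (Fin.insertNth (α := fun _ => Fin 2) j b x i)
        (Fin.insertNth (α := fun _ => Fin 2) j c y i))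
      = (if b = c then 1 else 0) * ∏ i, pauli (w i) (x i) (y i) := by
  rw [Fin.prod_univ_succAbove _ j]
  simp [Fin.insertNth_apply_succAbove, pauli, Matrix.one_apply]

lemma trace_pWord_ptrace {n : ℕ} (j : Fin (n+1)) (w : Fin n → Fin 4)
    (ρ : Matrix (Fin (n+1) → Fin 2) (Fin (n+1) → Fin 2) ℂ) :
    (pWord w * ptrace j ρ).trace = (pWord (j.insertNth 0 w) * ρ).trace := by
  have hR : (pWord (j.insertNth 0 w) * ρ).trace
      = ∑ p : Fin 2 × (Fin n → Fin 2), ∑ q : Fin 2 × (Fin n → Fin 2),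
          (∏ i, pauli (Fin.insertNth (α := fun _ => Fin 4) j 0 w i)
              (Fin.insertNth (α := fun _ => Fin 2) j p.1 p.2 i)
              (Fin.insertNth (α := fun _ => Fin 2) j q.1 q.2 i))
            * ρ (j.insertNth q.1 q.2) (j.insertNth p.1 p.2) := by
    simp only [Matrix.trace, Matrix.diag, Matrix.mul_apply, pWord, Matrix.of_apply]
    rw [← Equiv.sum_comp (Fin.insertNthEquiv (fun _ : Fin (n+1) => Fin 2) j)]
    refine Finset.sum_congr rfl fun p _ => ?_
    rw [← Equiv.sum_comp (Fin.insertNthEquiv (fun _ : Fin (n+1) => Fin 2) j)]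
    rfl
  rw [hR]
  simp only [prod_insert_eq, Fintype.sum_prod_type, ite_mul, one_mul, zero_mul]
  simp only [Matrix.trace, Matrix.diag, Matrix.mul_apply, pWord, ptrace, Matrix.of_apply,
    Finset.mul_sum]
  conv_lhs => enter [2, x]; rw [Finset.sum_comm]
  rw [Finset.sum_comm]
  refine Finset.sum_congr rfl fun b _ => Finset.sum_congr rfl fun x _ => ?_
  simp [Finset.sum_ite_irrel, Finset.sum_ite_eq]

lemma wt_insertNth {n : ℕ} (j : Fin (n+1)) (w : Fin n → Fin 4) :
    wt (j.insertNth 0 w) = wt w := by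
  simp only [wt, Finset.card_filter]
  rw [Fin.sum_univ_succAbove _ j]
  simp [Fin.insertNth_apply_succAbove]

/-- For any `(n+1)`-qubit state `ρ` and `k ≤ n+1`, the sector lengths of the
single-qubit partial traces satisfy `∑_j A_k(Tr_j ρ) = ((n+1) − k) · A_k(ρ)`. -/
theorem sum_ptrace_sector (n k : ℕ) (hk : k ≤ n + 1)
    (ρ : Matrix (Fin (n + 1) → Fin 2) (Fin (n + 1) → Fin 2) ℂ) (hρ : IsState ρ) :
    ∑ j : Fin (n + 1), sector n k (ptrace j ρ) = ((n + 1 - k : ℕ) : ℝ) * sector (n + 1) k ρ := by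
  set F : (Fin (n+1) → Fin 4) → ℝ := fun W => ((pWord W * ρ).trace.re) ^ 2 with hF
  have key : ∀ j : Fin (n+1), sector n k (ptrace j ρ)
      = ∑ W ∈ Finset.univ.filter (fun W : Fin (n+1) → Fin 4 => wt W = k ∧ W j = 0), F W := by
    intro j
    rw [sector]
    refine Finset.sum_nbij' (fun w => j.insertNth 0 w) (fun W => j.removeNth W)
      ?_ ?_ ?_ ?_ ?_
    · intro w hw
      simp only [Finset.mem_filter, Finset.mem_univ, true_and] at hw ⊢
      exact ⟨by rw [wt_insertNth]; exact hw, by simp⟩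
    · intro W hW
      simp only [Finset.mem_filter, Finset.mem_univ, true_and] at hW ⊢
      have hid : j.insertNth 0 (j.removeNth W) = W := by
        rw [← hW.2]; exact Fin.insertNth_self_removeNth j W
      rw [← hW.1]
      conv_rhs => rw [← hid]
      rw [wt_insertNth]
    · intro w _
      simp
    · intro W hW
      simp only [Finset.mem_filter, Finset.mem_univ, true_and] at hW
      rw [← hW.2]; exact Fin.insertNth_self_removeNth j W
    · intro w _
      rw [hF]
      simp only
      rw [trace_pWord_ptrace]
  calc ∑ j : Fin (n+1), sector n k (ptrace j ρ)
      = ∑ j : Fin (n+1), ∑ W : Fin (n+1) → Fin 4,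
          if wt W = k ∧ W j = 0 then F W else 0 := by
        refine Finset.sum_congr rfl fun j _ => ?_
        rw [key j, Finset.sum_filter]
    _ = ∑ W : Fin (n+1) → Fin 4, ∑ j : Fin (n+1),
          if wt W = k ∧ W j = 0 then F W else 0 := Finset.sum_comm
    _ = ((n + 1 - k : ℕ) : ℝ) * sector (n + 1) k ρ := by
        rw [sector, Finset.mul_sum, Finset.sum_filter]
        refine Finset.sum_congr rfl fun W _ => ?_
        by_cases h : wt W = k
        · simp only [h, true_and, if_true]
          rw [← Finset.sum_filter, Finset.sum_const, nsmul_eq_mul]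
          have hcard : (Finset.univ.filter fun j => W j = 0).card = n + 1 - k := by
            have h2 := Finset.card_filter_add_card_filter_not
              (s := (Finset.univ : Finset (Fin (n+1)))) (p := fun j => W j = 0)
            have h3 : (Finset.univ.filter fun j => ¬ W j = 0).card = k := by
              rw [← h]; rfl
            simp only [Finset.card_univ, Fintype.card_fin] at h2
            omega
          rw [hcard]
        · simp [h]
end

section
/- For any two-qubit density matrix ρ, the state inversion inequality A_1(ρ) − A_2(ρ) ≤ 1 holds, where A_1 and A_2 are the one- and two-body sector lengths. -/
open Matrix BigOperators Finset ComplexOrder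

/-! With `ρ̃ = (σ_y ⊗ σ_y) ρᵀ (σ_y ⊗ σ_y)` the spin-flipped state, a direct computation gives
`4 Tr(ρ ρ̃) = ∑_w (-1)^{wt w} Tr(P_w ρ)² = A₀ - A₁ + A₂`, and `A₀ = (Tr ρ)² = 1`.
Conjugating `ρᵀ` preserves positivity, and the trace of a product of two positive semidefinite
matrices is nonnegative, so `1 - A₁ + A₂ ≥ 0`. -/

lemma Matrix.IsHermitian.star_trace_mul {m : Type*} [Fintype m] {A B : Matrix m m ℂ}
    (hA : A.IsHermitian) (hB : B.IsHermitian) : star (A * B).trace = (A * B).trace := by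
  rw [← trace_conjTranspose, conjTranspose_mul, hA.eq, hB.eq, trace_mul_comm]

lemma Matrix.PosSemidef.trace_mul_nonneg {𝕜 m : Type*} [RCLike 𝕜] [Fintype m]
    {A B : Matrix m m 𝕜} (hA : A.PosSemidef) (hB : B.PosSemidef) : 0 ≤ (A * B).trace := by
  classical
  open scoped MatrixOrder in
  obtain ⟨C, rfl⟩ := CStarAlgebra.nonneg_iff_eq_star_mul_self.mp hA.nonneg
  rw [star_eq_conjTranspose, mul_assoc, trace_mul_comm]
  exact (hB.mul_mul_conjTranspose_same C).trace_nonneg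

lemma sum_fin_two_arrow {α M : Type*} [Fintype α] [AddCommMonoid M] (f : (Fin 2 → α) → M) :
    ∑ w, f w = ∑ a, ∑ b, f ![a, b] := by
  rw [← (finTwoArrowEquiv α).symm.sum_comp]
  simp [Fintype.sum_prod_type, finTwoArrowEquiv]

lemma pauli_conjTranspose (k : Fin 4) : (pauli k)ᴴ = pauli k := by
  fin_cases k <;> ext i j <;> fin_cases i <;> fin_cases j <;> simp [pauli, one_apply]

lemma pWord_isHermitian {n : ℕ} (w : Fin n → Fin 4) : (pWord w).IsHermitian := by
  ext x y
  simp only [conjTranspose_apply, pWord, of_apply, star_prod]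
  exact prod_congr rfl fun i _ => congrFun₂ (pauli_conjTranspose (w i)) (x i) (y i)

lemma pWord_zero {n : ℕ} : pWord (0 : Fin n → Fin 4) = 1 := by
  ext x y
  simp [pWord, pauli, one_apply, Finset.prod_boole, funext_iff]

lemma wt_eq_zero_iff {n : ℕ} {w : Fin n → Fin 4} : wt w = 0 ↔ w = 0 := by
  simp [wt, Finset.filter_eq_empty_iff, funext_iff]

lemma wt_le {n : ℕ} (w : Fin n → Fin 4) : wt w ≤ n :=
  (card_filter_le _ _).trans_eq (card_fin n)

lemma neg_one_pow_wt {R : Type*} [CommMonoid R] [HasDistribNeg R] {n : ℕ} (w : Fin n → Fin 4) :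
    (-1 : R) ^ wt w = ∏ i, if w i = 0 then 1 else -1 := by
  rw [prod_ite, prod_const_one, one_mul, prod_const, wt]

lemma sector_zero {n : ℕ} (ρ : Matrix (Fin n → Fin 2) (Fin n → Fin 2) ℂ) :
    sector n 0 ρ = ρ.trace.re ^ 2 := by
  simp [sector, wt_eq_zero_iff, filter_eq', pWord_zero]

lemma ofReal_sum_neg_one_pow_mul_sector {n : ℕ} {ρ : Matrix (Fin n → Fin 2) (Fin n → Fin 2) ℂ}
    (hρ : ρ.IsHermitian) :
    ((∑ k ∈ range (n + 1), (-1) ^ k * sector n k ρ : ℝ) : ℂ) =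
      ∑ w : Fin n → Fin 4, (-1) ^ wt w * (pWord w * ρ).trace ^ 2 := by
  rw [← sum_fiberwise_of_maps_to (g := wt) (t := range (n + 1))
    fun w _ => mem_range_succ_iff.mpr (wt_le w)]
  simp only [sector]
  push_cast
  refine sum_congr rfl fun k _ => ?_
  rw [mul_sum]
  refine sum_congr rfl fun w hw => ?_
  rw [(mem_filter.mp hw).2, Complex.conj_eq_iff_re.mp
    ((pWord_isHermitian w).star_trace_mul hρ)]

noncomputable def spinFlip (ρ : Matrix (Fin 2 → Fin 2) (Fin 2 → Fin 2) ℂ) :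
    Matrix (Fin 2 → Fin 2) (Fin 2 → Fin 2) ℂ :=
  pWord ![2, 2] * ρᵀ * pWord ![2, 2]

lemma spinFlip_posSemidef {ρ : Matrix (Fin 2 → Fin 2) (Fin 2 → Fin 2) ℂ} (hρ : ρ.PosSemidef) :
    (spinFlip ρ).PosSemidef := by
  simpa only [spinFlip, (pWord_isHermitian _).eq] using
    hρ.transpose.mul_mul_conjTranspose_same (pWord ![2, 2])

/-- Tensor square of the one-qubit identity `∑ₐ εₐ Tr(σₐ A) Tr(σₐ B) = 2 Tr(A σ_y Bᵀ σ_y)`,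
`ε = (1, -1, -1, -1)`; it is checked here entry by entry. -/
lemma sum_neg_one_pow_wt_mul_trace_sq (ρ : Matrix (Fin 2 → Fin 2) (Fin 2 → Fin 2) ℂ) :
    ∑ w : Fin 2 → Fin 4, (-1) ^ wt w * (pWord w * ρ).trace ^ 2 = 4 * (ρ * spinFlip ρ).trace := by
  rw [sum_fin_two_arrow]
  simp only [Fin.sum_univ_four, neg_one_pow_wt, Fin.prod_univ_two, cons_val_zero, cons_val_one,
    Fin.isValue, Fin.reduceEq, if_true, if_false, one_mul, mul_one, neg_one_mul, mul_neg, neg_neg]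
  simp only [spinFlip, Matrix.trace, Matrix.diag, mul_apply, transpose_apply, pWord, of_apply,
    sum_fin_two_arrow, Fin.sum_univ_two, Fin.prod_univ_two, cons_val_zero, cons_val_one]
  norm_num [pauli, one_apply]
  ring_nf
  simp only [Complex.I_sq]
  ring

/-- The state inversion inequality for two qubits: `A₁(ρ) − A₂(ρ) ≤ 1`. -/
theorem two_qubit_state_inversion (ρ : Matrix (Fin 2 → Fin 2) (Fin 2 → Fin 2) ℂ)
    (hρ : IsState ρ) : sector 2 1 ρ - sector 2 2 ρ ≤ 1 := by
  obtain ⟨hpsd, htr⟩ := hρ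
  have hsigned : 0 ≤ ∑ k ∈ range 3, (-1 : ℝ) ^ k * sector 2 k ρ := by
    rw [← Complex.zero_le_real, ofReal_sum_neg_one_pow_mul_sector hpsd.isHermitian,
      sum_neg_one_pow_wt_mul_trace_sq]
    exact mul_nonneg (by norm_num) (hpsd.trace_mul_nonneg (spinFlip_posSemidef hpsd))
  norm_num [sum_range_succ, sector_zero, htr] at hsigned
  linarith
end
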